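/- Let μ be the measure with density π_used(β|D) and ν the measure with density proportional to π_used(β|D)·ω(β), where ω(β) = 0.5 + (1/(4T·φ(β)))·1_{[-T,T]}(β) and φ is a positive density. Then the ν-probability of the ROPE [-T,T] equals [0.5·μ([-T,T]) + (1/(4T))∫_{-T}^{T} π_used(β|D)/φ(β) dβ] divided by [0.5 + (1/(4T))∫_{-T}^{T} π_used(β|D)/φ(β) dβ], and in particular ν([-T,T]) ≥ μ([-T,T]). -/

import Mathlib

open Real MeasureTheory

/-! On the ROPE `[-T, T]` the weight `ω` cancels the normal prior, so `πU · ω` is the mixture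
`½ πU + c · 1_{[-T,T]} · πU / φ` with `c = 1 / (4T)`, whose total mass is `½ + c R` and whose mass
on the ROPE is `½ I + c R`, where `I = μ([-T, T])` and `R = ∫_{[-T,T]} πU / φ`. Adding the
nonnegative mass `c R`, all of it inside the ROPE, can only raise the ROPE's share:
`I ≤ (½ I + c R) / (½ + c R)` because `I ≤ 1`. -/

lemma mul_add_inv_mul_indicator_one {α : Type*} (s : Set α) (f g : α → ℝ) (a c : ℝ) (x : α) :
    f x * (a + c * (1 / g x) * s.indicator (fun _ => (1 : ℝ)) x)
      = a * f x + c * s.indicator (fun y => f y / g y) x := by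
  by_cases hx : x ∈ s
  · simp only [Set.indicator_of_mem hx]
    ring
  · simp only [Set.indicator_of_notMem hx]
    ring

section MixtureIntegral

variable {α : Type*} [MeasurableSpace α] {μ : Measure α} {s : Set α} {f h : α → ℝ}

lemma integral_mul_add_mul_indicator (a c : ℝ) (hs : MeasurableSet s) (hf : Integrable f μ)
    (hh : IntegrableOn h s μ) :
    ∫ x, (a * f x + c * s.indicator h x) ∂μ = a * ∫ x, f x ∂μ + c * ∫ x in s, h x ∂μ := by
  rw [integral_add (hf.const_mul a) ((hh.integrable_indicator hs).const_mul c),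
    integral_const_mul, integral_const_mul, integral_indicator hs]

lemma setIntegral_mul_add_mul_indicator (a c : ℝ) (hs : MeasurableSet s) (hf : Integrable f μ)
    (hh : IntegrableOn h s μ) :
    ∫ x in s, (a * f x + c * s.indicator h x) ∂μ = a * ∫ x in s, f x ∂μ + c * ∫ x in s, h x ∂μ := by
  rw [integral_mul_add_mul_indicator a c hs hf.integrableOn hh.restrict, Measure.restrict_restrict hs,
    Set.inter_self]

end MixtureIntegral

lemma le_mul_add_div_add {a r p : ℝ} (ha : 0 < a) (hr : 0 ≤ r) (hp : p ≤ 1) :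
    p ≤ (a * p + r) / (a + r) := by
  rw [le_div_iff₀ (by positivity)]
  nlinarith

theorem reweighted_rope_probability_general
    (σ T : ℝ) (hσ : 0 < σ) (hT : 0 < T)
    (φ πU ω : ℝ → ℝ)
    (hφ : ∀ β, φ β = (1 / (σ * Real.sqrt (2 * π))) * Real.exp (-β ^ 2 / (2 * σ ^ 2)))
    (hπ_nonneg : ∀ β, 0 ≤ πU β)
    (hπ_int : Integrable πU)
    (hπ_prob : ∫ β, πU β = 1)
    (hratio_int : IntegrableOn (fun β => πU β / φ β) (Set.Icc (-T) T))
    (hω : ∀ β, ω β = 0.5 + (1 / (4 * T)) * (1 / φ β) * Set.indicator (Set.Icc (-T) T) (fun _ => (1:ℝ)) β) :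
    (∫ β in Set.Icc (-T) T, πU β * ω β) / (∫ β, πU β * ω β)
      = (0.5 * (∫ β in Set.Icc (-T) T, πU β)
           + (1 / (4 * T)) * ∫ β in Set.Icc (-T) T, πU β / φ β)
        / (0.5 + (1 / (4 * T)) * ∫ β in Set.Icc (-T) T, πU β / φ β) ∧
    (∫ β in Set.Icc (-T) T, πU β)
      ≤ (∫ β in Set.Icc (-T) T, πU β * ω β) / (∫ β, πU β * ω β) := by
  have hmixture : ∀ β, πU β * ω β
      = 0.5 * πU β + 1 / (4 * T) * (Set.Icc (-T) T).indicator (fun b => πU b / φ b) β := fun β => by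
    rw [hω, mul_add_inv_mul_indicator_one]
  have htotal : ∫ β, πU β * ω β = 0.5 + 1 / (4 * T) * ∫ β in Set.Icc (-T) T, πU β / φ β := by
    simp only [hmixture, integral_mul_add_mul_indicator _ _ measurableSet_Icc hπ_int hratio_int,
      hπ_prob, mul_one]
  have hrope : ∫ β in Set.Icc (-T) T, πU β * ω β
      = 0.5 * (∫ β in Set.Icc (-T) T, πU β) + 1 / (4 * T) * ∫ β in Set.Icc (-T) T, πU β / φ β := by
    simp only [hmixture, setIntegral_mul_add_mul_indicator _ _ measurableSet_Icc hπ_int hratio_int]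
  have hφ_nonneg : ∀ β, 0 ≤ φ β := fun β => by rw [hφ]; positivity
  have hratio_nonneg : 0 ≤ ∫ β in Set.Icc (-T) T, πU β / φ β :=
    setIntegral_nonneg measurableSet_Icc fun β _ => div_nonneg (hπ_nonneg β) (hφ_nonneg β)
  have hrope_le_one : ∫ β in Set.Icc (-T) T, πU β ≤ 1 :=
    hπ_prob ▸ setIntegral_le_integral hπ_int (ae_of_all _ hπ_nonneg)
  rw [htotal, hrope]
  exact ⟨rfl, le_mul_add_div_add (by norm_num) (by positivity) hrope_le_one⟩

/-- reweighting the used posterior density π by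
ω(β) = 0.5 + (1/(4T·φ(β)))·1_{[-T,T]}(β) yields a ROPE probability equal to
(0.5·μ(ROPE) + (1/(4T))∫_ROPE π/φ) / (0.5 + (1/(4T))∫_ROPE π/φ), which is at least
the unweighted ROPE probability μ(ROPE) = ∫_ROPE π. -/
theorem reweighted_rope_probability
    (σ T : ℝ) (hσ : 0 < σ) (hT : 0 < T)
    (φ πU ω : ℝ → ℝ)
    (hφ : ∀ β, φ β = (1 / (σ * Real.sqrt (2 * π))) * Real.exp (-β ^ 2 / (2 * σ ^ 2)))
    (hπ_nonneg : ∀ β, 0 ≤ πU β)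
    (hπ_meas : Measurable πU)
    (hπ_int : Integrable πU)
    (hπ_prob : ∫ β, πU β = 1)
    (hratio_int : IntegrableOn (fun β => πU β / φ β) (Set.Icc (-T) T))
    (hω : ∀ β, ω β = 0.5 + (1 / (4 * T)) * (1 / φ β) * Set.indicator (Set.Icc (-T) T) (fun _ => (1:ℝ)) β) :
    (∫ β in Set.Icc (-T) T, πU β * ω β) / (∫ β, πU β * ω β)
      = (0.5 * (∫ β in Set.Icc (-T) T, πU β)
           + (1 / (4 * T)) * ∫ β in Set.Icc (-T) T, πU β / φ β)
        / (0.5 + (1 / (4 * T)) * ∫ β in Set.Icc (-T) T, πU β / φ β) ∧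
    (∫ β in Set.Icc (-T) T, πU β)
      ≤ (∫ β in Set.Icc (-T) T, πU β * ω β) / (∫ β, πU β * ω β) :=
  reweighted_rope_probability_general σ T hσ hT φ πU ω hφ hπ_nonneg hπ_int hπ_prob hratio_int hω
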